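/- Let c ≥ 7, S = ℚ[x_0, …, x_{c−1}] with indices read modulo c, and q_i = x_i² − x_{i−1}x_{i−3} for each i. Then the monomial x_{c−1}x_{c−2} does NOT belong to the ideal (x_2, x_3, …, x_{c−3}, q_1, q_2, …, q_{c−1}) of S. -/
import Mathlib


open MvPolynomial

set_option synthInstance.maxHeartbeats 1000000
set_option maxHeartbeats 1000000

/-- The binomial quadric `q_i = x_i² − x_{i−1} x_{i−3}` (indices modulo `c`). -/
noncomputable def binQuadric (c : ℕ) [NeZero c] (i : ZMod c) : MvPolynomial (ZMod c) ℚ :=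
  X i ^ 2 - X (i - 1) * X (i - 3)

open TrivSqZeroExt DualNumber in
/-- The witness point: `x_{-2} ↦ inl ε`, `x_{-1} ↦ ε`, all other variables to `0`,
with values in `ℚ[ε][ε]`. -/
noncomputable def myVal (c : ℕ) [NeZero c] (i : ZMod c) : DualNumber (DualNumber ℚ) :=
  if i = -2 then inl eps else if i = -1 then eps else 0

lemma zmod_cast_ne {c : ℕ} [NeZero c] {j k : ℕ} (hj : j < c) (hk : k < c) (h : j ≠ k) :
    (j : ZMod c) ≠ (k : ZMod c) := by
  intro H
  have := congrArg ZMod.val H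
  rw [ZMod.val_cast_of_lt hj, ZMod.val_cast_of_lt hk] at this
  exact h this

lemma natsub_cast {c : ℕ} [NeZero c] (k : ℕ) (hk : k ≤ c) :
    ((c - k : ℕ) : ZMod c) = -(k : ZMod c) := by
  rw [Nat.cast_sub hk, ZMod.natCast_self, zero_sub]

lemma small_neg_ne {c : ℕ} [NeZero c] (hc : 7 ≤ c) {j k : ℕ} (hj : j ≤ 6) (hk : k ≤ 6)
    (hjk : j ≠ k) : -((j : ℕ) : ZMod c) ≠ -((k : ℕ) : ZMod c) := by
  intro H
  exact zmod_cast_ne (by omega) (by omega) hjk (neg_inj.mp H)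

lemma cast_ne_neg {c : ℕ} [NeZero c] (hc : 7 ≤ c) {n k : ℕ} (hn2 : 1 ≤ n) (hn3 : n ≤ c - 3)
    (hk1 : 1 ≤ k) (hk : k ≤ 2) : ((n : ℕ) : ZMod c) ≠ -((k : ℕ) : ZMod c) := by
  intro H
  have h1 : (((n + k : ℕ)) : ZMod c) = 0 := by push_cast; linear_combination H
  have h2 : c ∣ n + k := (ZMod.natCast_eq_zero_iff _ _).mp h1
  have h3 : c ≤ n + k := Nat.le_of_dvd (by omega) h2
  omega

open TrivSqZeroExt DualNumber in
lemma myVal_eq_zero {c : ℕ} [NeZero c] {i : ZMod c} (h2 : i ≠ -2) (h1 : i ≠ -1) :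
    myVal c i = 0 := by
  rw [myVal, if_neg h2, if_neg h1]

open TrivSqZeroExt DualNumber in
lemma eps_mul_inl_eps_ne_zero :
    (eps : DualNumber (DualNumber ℚ)) * inl (eps : DualNumber ℚ) ≠ 0 := by
  show (inr (1 : DualNumber ℚ) : DualNumber (DualNumber ℚ)) * inl eps ≠ 0
  rw [inr_mul_inl]
  intro h
  rw [← inr_zero (R := DualNumber ℚ) (M := DualNumber ℚ)] at h
  have h2 := inr_injective h
  rw [op_smul_eq_smul, smul_eq_mul, mul_one,
    ← inr_zero (R := ℚ) (M := ℚ)] at h2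
  exact one_ne_zero (inr_injective h2)

open TrivSqZeroExt DualNumber in
/-- For `c ≥ 7`, the monomial `x_{c−1} x_{c−2}` does not belong to the ideal
`(x_2, x_3, …, x_{c−3}, q_1, q_2, …, q_{c−1})` of `S = ℚ[x_0, …, x_{c−1}]`. -/
theorem monomial_not_mem (c : ℕ) (hc : 7 ≤ c) [NeZero c] :
    X ((c - 1 : ℕ) : ZMod c) * X ((c - 2 : ℕ) : ZMod c) ∉
      Ideal.span
        ({p : MvPolynomial (ZMod c) ℚ | ∃ n : ℕ, 2 ≤ n ∧ n ≤ c - 3 ∧ p = X (n : ZMod c)} ∪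
         {p | ∃ i : ZMod c, i ≠ 0 ∧ p = binQuadric c i}) := by
  intro hmem
  classical
  set φ : MvPolynomial (ZMod c) ℚ →ₐ[ℚ] DualNumber (DualNumber ℚ) :=
    MvPolynomial.aeval (myVal c) with hφ
  -- every generator is killed by φ
  have hgen : ({p : MvPolynomial (ZMod c) ℚ |
        ∃ n : ℕ, 2 ≤ n ∧ n ≤ c - 3 ∧ p = X (n : ZMod c)} ∪
        {p | ∃ i : ZMod c, i ≠ 0 ∧ p = binQuadric c i}) ⊆
      (RingHom.ker φ.toRingHom : Ideal (MvPolynomial (ZMod c) ℚ)) := by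
    rintro p (⟨n, hn2, hn3, rfl⟩ | ⟨i, hi, rfl⟩)
    · have : φ (X (n : ZMod c)) = 0 := by
        rw [hφ, aeval_X]
        refine myVal_eq_zero ?_ ?_
        · simpa using cast_ne_neg hc (n := n) (k := 2) (by omega) hn3 (by omega) (by omega)
        · simpa using cast_ne_neg hc (n := n) (k := 1) (by omega) hn3 (by omega) (by omega)
      exact this
    · have : φ (binQuadric c i) = 0 := by
        rw [hφ, binQuadric, map_sub, map_mul, map_pow, aeval_X, aeval_X, aeval_X]
        by_cases h2 : i = -2
        · subst h2
          have e1 : (-2 : ZMod c) - 1 = -3 := by ring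
          have e3 : (-2 : ZMod c) - 3 = -5 := by ring
          rw [e1, e3]
          have v2 : myVal c (-2) = inl eps := by rw [myVal, if_pos rfl]
          have v3 : myVal c (-3) = 0 := by
            refine myVal_eq_zero ?_ ?_
            · simpa using small_neg_ne (c := c) hc (j := 3) (k := 2) (by omega) (by omega)
                (by omega)
            · simpa using small_neg_ne (c := c) hc (j := 3) (k := 1) (by omega) (by omega)
                (by omega)
          have v5 : myVal c (-5) = 0 := by
            refine myVal_eq_zero ?_ ?_
            · simpa using small_neg_ne (c := c) hc (j := 5) (k := 2) (by omega) (by omega)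
                (by omega)
            · simpa using small_neg_ne (c := c) hc (j := 5) (k := 1) (by omega) (by omega)
                (by omega)
          rw [v2, v3, v5, sq, ← inl_mul, eps_mul_eps, inl_zero]
          ring
        · by_cases h1 : i = -1
          · subst h1
            have e1 : (-1 : ZMod c) - 1 = -2 := by ring
            have e3 : (-1 : ZMod c) - 3 = -4 := by ring
            rw [e1, e3]
            have v1 : myVal c (-1) = eps := by
              rw [myVal, if_neg, if_pos rfl]
              simpa using small_neg_ne (c := c) hc (j := 1) (k := 2) (by omega) (by omega)
                (by omega)
            have v4 : myVal c (-4) = 0 := by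
              refine myVal_eq_zero ?_ ?_
              · simpa using small_neg_ne (c := c) hc (j := 4) (k := 2) (by omega) (by omega)
                  (by omega)
              · simpa using small_neg_ne (c := c) hc (j := 4) (k := 1) (by omega) (by omega)
                  (by omega)
            rw [v1, v4, sq, eps_mul_eps]
            ring
          · have v0 : myVal c i = 0 := myVal_eq_zero h2 h1
            have v1 : myVal c (i - 1) = 0 := by
              refine myVal_eq_zero ?_ ?_
              · intro H; exact h1 (by linear_combination H)
              · intro H; exact hi (by linear_combination H)
            rw [v0, v1]
            ring
      exact this
  have h0 : φ (X ((c - 1 : ℕ) : ZMod c) * X ((c - 2 : ℕ) : ZMod c)) = 0 :=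
    Ideal.span_le.mpr hgen hmem
  rw [hφ, map_mul, aeval_X, aeval_X, natsub_cast 1 (by omega), natsub_cast 2 (by omega)] at h0
  have w1 : myVal c (-((1 : ℕ) : ZMod c)) = eps := by
    rw [myVal, if_neg, if_pos (by norm_num)]
    simpa using small_neg_ne (c := c) hc (j := 1) (k := 2) (by omega) (by omega) (by omega)
  have w2 : myVal c (-((2 : ℕ) : ZMod c)) = inl eps := by
    rw [myVal, if_pos (by norm_num)]
  rw [w1, w2] at h0
  exact eps_mul_inl_eps_ne_zero h0
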